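/- Let 𝓛 : ℝ^n → ℝ be differentiable with L-Lipschitz gradient, σ > 0, and consider two consecutive steps θ_t = θ_{t−1} + η·p_{t−1} and θ_{t+1} = θ_t + η·p_t, where the first update is the exactly isotropically preconditioned gradient step p_{t−1} = −σ·∇𝓛(θ_{t−1}) and p_t ∈ ℝ^n is an arbitrary nonzero vector (the next update), with p_{t−1} ≠ 0. Then for every η > 0, 𝓛(θ_{t−1}) − 𝓛(θ_{t+1}) ≥ (η/σ)·‖p_{t−1}‖² − (L·η²/2)·(‖p_{t−1}‖² + ‖p_t‖²) + (η/σ − L·η²)·‖p_{t−1}‖·‖p_t‖·S(p_{t−1}, p_t); moreover if η < 1/(L·σ) then the coefficient η/σ − L·η² of the alignment term is strictly positive, so the guaranteed two-step loss reduction is strictly increasing in the inter-step cosine S(p_{t−1}, p_t). -/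

import Mathlib

open scoped RealInnerProductSpace

/-! The descent lemma `f (x + v) ≤ f x + ⟪∇f x, v⟫ + L/2 ‖v‖²` for an `L`-Lipschitz gradient,
applied once to the combined step `v = η (p₀ + p₁)` with `∇𝓛 θ₀ = -σ⁻¹ p₀`, expands into the
two-step bound, in which `‖p₀‖ ‖p₁‖ S(p₀, p₁) = ⟪p₀, p₁⟫`. The coefficient `η/σ - Lη²` equals
`(η/σ)(1 - Lση)`. -/

section LipschitzGradient

variable {E : Type*} [NormedAddCommGroup E] [InnerProductSpace ℝ E] [CompleteSpace E]
  {f : E → ℝ} {L : ℝ}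

theorem HasGradientAt.hasDerivAt_comp_add_smul {g x v : E} {t : ℝ}
    (h : HasGradientAt f g (x + t • v)) :
    HasDerivAt (fun s : ℝ => f (x + s • v)) ⟪g, v⟫ t := by
  have hline : HasDerivAt (fun s : ℝ => x + s • v) v t :=
    ((hasDerivAt_id t).smul_const v).const_add x |>.congr_deriv (one_smul ℝ v)
  simpa [Function.comp_def] using (hasGradientAt_iff_hasFDerivAt.mp h).comp_hasDerivAt t hline

theorem inner_gradient_add_smul_sub_le
    (hlip : ∀ x y, ‖gradient f x - gradient f y‖ ≤ L * ‖x - y‖) (x v : E) {t : ℝ} (ht : 0 ≤ t) :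
    ⟪gradient f (x + t • v) - gradient f x, v⟫ ≤ L * t * ‖v‖ ^ 2 :=
  calc ⟪gradient f (x + t • v) - gradient f x, v⟫
      ≤ ‖gradient f (x + t • v) - gradient f x‖ * ‖v‖ := real_inner_le_norm _ _
    _ ≤ L * ‖(x + t • v) - x‖ * ‖v‖ := by gcongr; exact hlip _ _
    _ = L * t * ‖v‖ ^ 2 := by
      rw [add_sub_cancel_left, norm_smul, Real.norm_of_nonneg ht]; ring

theorem apply_add_le_of_lipschitz_gradient (hf : Differentiable ℝ f)
    (hlip : ∀ x y, ‖gradient f x - gradient f y‖ ≤ L * ‖x - y‖) (x v : E) :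
    f (x + v) ≤ f x + ⟪gradient f x, v⟫ + L / 2 * ‖v‖ ^ 2 := by
  have hφ (t : ℝ) : HasDerivAt (fun s : ℝ => f (x + s • v)) ⟪gradient f (x + t • v), v⟫ t :=
    (hf _).hasGradientAt.hasDerivAt_comp_add_smul
  have hB (t : ℝ) :
      HasDerivAt (fun s : ℝ => f x + s * ⟪gradient f x, v⟫ + L / 2 * s ^ 2 * ‖v‖ ^ 2)
        (⟪gradient f x, v⟫ + L * t * ‖v‖ ^ 2) t :=
    ((((hasDerivAt_id t).mul_const ⟪gradient f x, v⟫).const_add (f x)).add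
      (((hasDerivAt_pow 2 t).const_mul (L / 2)).mul_const (‖v‖ ^ 2))).congr_deriv
      (by push_cast; ring)
  -- compare `t ↦ f (x + t • v)` on `[0, 1]` with the parabola whose derivative dominates its own
  have hcompare := image_le_of_deriv_right_le_deriv_boundary
    (fun t _ => (hφ t).continuousAt.continuousWithinAt) (fun t _ => (hφ t).hasDerivWithinAt)
    (by simp) (fun t _ => (hB t).continuousAt.continuousWithinAt)
    (fun t _ => (hB t).hasDerivWithinAt)
    (fun t ht => by
      have := inner_gradient_add_smul_sub_le hlip x v ht.1
      rw [inner_sub_left] at this; linarith)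
    (Set.right_mem_Icc.2 zero_le_one)
  simpa using hcompare

theorem sub_apply_two_steps_ge_of_lipschitz_gradient (hf : Differentiable ℝ f)
    (hlip : ∀ x y, ‖gradient f x - gradient f y‖ ≤ L * ‖x - y‖) {σ : ℝ} (hσ : σ ≠ 0)
    {θ₀ p₀ : E} (hp₀ : p₀ = -(σ • gradient f θ₀)) (p₁ : E) (η : ℝ) :
    f θ₀ - f ((θ₀ + η • p₀) + η • p₁) ≥
      (η / σ) * ‖p₀‖ ^ 2 - (L * η ^ 2 / 2) * (‖p₀‖ ^ 2 + ‖p₁‖ ^ 2) +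
        (η / σ - L * η ^ 2) * ⟪p₀, p₁⟫ := by
  have hgrad : gradient f θ₀ = -σ⁻¹ • p₀ := by
    rw [hp₀, smul_neg, neg_smul, neg_neg, smul_smul, inv_mul_cancel₀ hσ, one_smul]
  have hdescent := apply_add_le_of_lipschitz_gradient hf hlip θ₀ (η • (p₀ + p₁))
  rw [hgrad, real_inner_smul_left, real_inner_smul_right, inner_add_right,
    real_inner_self_eq_norm_sq, norm_smul, mul_pow, Real.norm_eq_abs, sq_abs,
    norm_add_sq_real] at hdescent
  rw [add_assoc, ← smul_add, div_eq_mul_inv η σ]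
  linarith

end LipschitzGradient

theorem norm_mul_norm_mul_inner_div {E : Type*} [NormedAddCommGroup E] [InnerProductSpace ℝ E]
    (a b : E) : ‖a‖ * ‖b‖ * (⟪a, b⟫ / (‖a‖ * ‖b‖)) = ⟪a, b⟫ := by
  rcases eq_or_ne (‖a‖ * ‖b‖) 0 with h | h
  · rcases mul_eq_zero.mp h with ha | hb
    · simp [norm_eq_zero.mp ha]
    · simp [norm_eq_zero.mp hb]
  · exact mul_div_cancel₀ _ h

theorem div_sub_mul_sq_pos {L σ η : ℝ} (hσ : 0 < σ) (hη : 0 < η) (hlt : η < 1 / (L * σ)) :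
    0 < η / σ - L * η ^ 2 := by
  have hLσ : 0 < L * σ := one_div_pos.mp (hη.trans hlt)
  have hstep : L * σ * η < 1 := (lt_div_iff₀' hLσ).mp hlt
  have : η / σ - L * η ^ 2 = η / σ * (1 - L * σ * η) := by field_simp
  rw [this]
  exact mul_pos (div_pos hη hσ) (by linarith)

theorem two_step_descent_alignment_general
    {n : ℕ} (𝓛 : EuclideanSpace ℝ (Fin n) → ℝ) (L σ : ℝ) (hσ : 0 < σ)
    (hdiff : Differentiable ℝ 𝓛)
    (hlip : ∀ x y, ‖gradient 𝓛 x - gradient 𝓛 y‖ ≤ L * ‖x - y‖)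
    (θ₀ p₀ p₁ : EuclideanSpace ℝ (Fin n))
    (hp₀ : p₀ = -(σ • gradient 𝓛 θ₀))
    (η : ℝ) (hη : 0 < η) :
    𝓛 θ₀ - 𝓛 ((θ₀ + η • p₀) + η • p₁) ≥
      (η / σ) * ‖p₀‖ ^ 2 - (L * η ^ 2 / 2) * (‖p₀‖ ^ 2 + ‖p₁‖ ^ 2) +
        (η / σ - L * η ^ 2) * (‖p₀‖ * ‖p₁‖ * (⟪p₀, p₁⟫ / (‖p₀‖ * ‖p₁‖))) ∧
    (η < 1 / (L * σ) → 0 < η / σ - L * η ^ 2) := by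
  rw [norm_mul_norm_mul_inner_div]
  exact ⟨sub_apply_two_steps_ge_of_lipschitz_gradient hdiff hlip hσ.ne' hp₀ p₁ η,
    div_sub_mul_sq_pos hσ hη⟩

/-- **Trajectory coherence maximizes two-step descent.** Let `𝓛` be differentiable
with `L`-Lipschitz gradient, `σ > 0`, and consider two consecutive steps
`θ_t = θ_{t−1} + η·p_{t−1}`, `θ_{t+1} = θ_t + η·p_t` with
`p_{t−1} = −σ·∇𝓛(θ_{t−1}) ≠ 0` and `p_t` an arbitrary nonzero vector. Then for every
`η > 0`,
`𝓛(θ_{t−1}) − 𝓛(θ_{t+1}) ≥ (η/σ)‖p_{t−1}‖² − (Lη²/2)(‖p_{t−1}‖² + ‖p_t‖²)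
  + (η/σ − Lη²)·‖p_{t−1}‖‖p_t‖·S(p_{t−1}, p_t)`,
and for `η < 1/(L·σ)` the alignment coefficient `η/σ − Lη²` is strictly positive. -/
theorem two_step_descent_alignment
    {n : ℕ} (𝓛 : EuclideanSpace ℝ (Fin n) → ℝ) (L σ : ℝ) (hL : 0 < L) (hσ : 0 < σ)
    (hdiff : Differentiable ℝ 𝓛)
    (hlip : ∀ x y, ‖gradient 𝓛 x - gradient 𝓛 y‖ ≤ L * ‖x - y‖)
    (θ₀ p₀ p₁ : EuclideanSpace ℝ (Fin n))
    (hp₀ : p₀ = -(σ • gradient 𝓛 θ₀)) (hp₀ne : p₀ ≠ 0) (hp₁ne : p₁ ≠ 0)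
    (η : ℝ) (hη : 0 < η) :
    𝓛 θ₀ - 𝓛 ((θ₀ + η • p₀) + η • p₁) ≥
      (η / σ) * ‖p₀‖ ^ 2 - (L * η ^ 2 / 2) * (‖p₀‖ ^ 2 + ‖p₁‖ ^ 2) +
        (η / σ - L * η ^ 2) * (‖p₀‖ * ‖p₁‖ * (⟪p₀, p₁⟫ / (‖p₀‖ * ‖p₁‖))) ∧
    (η < 1 / (L * σ) → 0 < η / σ - L * η ^ 2) :=
  two_step_descent_alignment_general 𝓛 L σ hσ hdiff hlip θ₀ p₀ p₁ hp₀ η hη
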